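/- For a ≥ 7, the value of the irreducible character of S_{2a+4} indexed by β = (a, 4, 3, 1^{a-3}) at the conjugacy class of cycle type (a, a-1, 4, 1) equals 0. -/

import Mathlib

/-- The beta-set (set of first-column hook lengths) of a partition given as a
weakly decreasing list of parts. -/
def betaSet (l : List ℕ) : List ℕ :=
  l.zipIdx.map (fun p => p.1 + (l.length - 1 - p.2))

/-- Recover a partition (weakly decreasing list of positive parts) from a
list of distinct beta-numbers. -/
def fromBeta (b : List ℕ) : List ℕ :=
  let s := List.insertionSort (· ≥ ·) b
  (s.zipIdx.map (fun p => p.1 - (s.length - 1 - p.2))).filter (fun x => x ≠ 0)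

/-- `MN β γ` is the value of the irreducible character of the symmetric group
indexed by the partition `β` at the conjugacy class of cycle type `γ`,
computed via the Murnaghan–Nakayama rule (phrased in terms of beta-numbers:
removing a rim hook of length `q` replaces a beta-number `x` by `x - q`,
the sign being `(-1)` to the number of beta-numbers strictly between
`x - q` and `x`, i.e. the leg length of the hook). -/
def MN : List ℕ → List ℕ → ℤ
  | β, [] => if β = [] then 1 else 0
  | β, q :: γ =>
      ((betaSet β).map (fun x =>
        if q ≤ x ∧ x - q ∉ betaSet β then
          (-1) ^ ((betaSet β).filter (fun y => x - q < y ∧ y < x)).length *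
            MN (fromBeta ((x - q) :: (betaSet β).erase x)) γ
        else 0)).sum

/-- `l` is a partition of `m`: a weakly decreasing list of positive parts
summing to `m`. -/
def IsPartition (l : List ℕ) (m : ℕ) : Prop :=
  l.Pairwise (· ≥ ·) ∧ (∀ i ∈ l, 0 < i) ∧ l.sum = m

/-- The conjugate (transpose) partition: `(conjugate l)_i = #{j : l_j > i}`. -/
def conjugate (l : List ℕ) : List ℕ :=
  (List.range (l.foldr max 0)).map (fun i => (l.filter (fun p => i < p)).length)

/-!
In beta-number language the beta-set of `β = (a, 4, 3, 1^{a-3})` is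
`{2a-1, a+2, a} ∪ {1, …, a-3}`. An `a`-hook can be removed in exactly two ways: from `2a-1`,
leaving `(3, 2, 2, 1^{a-3})` with sign `+1`, and from `a`, leaving `(a, 4)` with sign
`(-1)^{a-3}`. Each of these admits exactly one `(a-1)`-hook, and both leave `(3, 2)`, with signs
`(-1)^{a-3}` and `-1` respectively. The two contributions to `χ^β` therefore cancel, whatever the
value of `χ^{(3,2)}` at `(4, 1)`.
-/

theorem betaSet_cons (x : ℕ) (l : List ℕ) :
    betaSet (x :: l) = (x + l.length) :: betaSet l := by
  simp only [betaSet, List.zipIdx_cons, List.zipIdx_succ, List.map_cons, List.map_map]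
  congr 1
  refine List.map_congr_left fun p _ => ?_
  simp only [List.length_cons, add_tsub_cancel_right, Function.comp_apply, Nat.add_left_cancel_iff]
  omega

@[simp] theorem length_betaSet (l : List ℕ) : (betaSet l).length = l.length := by
  simp [betaSet]

theorem betaSet_replicate (k c : ℕ) :
    betaSet (List.replicate k c) = (List.range' c k).reverse := by
  induction k with
  | zero => rfl
  | succ k ih =>
    rw [List.replicate_succ, betaSet_cons, ih, List.range'_concat, List.reverse_append,
      List.length_replicate]
    simp

theorem betaSet_replicate_succ (k c : ℕ) :
    betaSet (List.replicate (k + 1) c) = betaSet (List.replicate k (c + 1)) ++ [c] := by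
  rw [betaSet_replicate, betaSet_replicate, List.range'_succ, List.reverse_cons]

theorem mem_betaSet_replicate {k c x : ℕ} :
    x ∈ betaSet (List.replicate k c) ↔ c ≤ x ∧ x < c + k := by
  rw [betaSet_replicate, List.mem_reverse, List.mem_range'_1]

theorem lt_of_mem_betaSet {l : List ℕ} {x : ℕ} (hl : ∀ y ∈ l, y ≤ x) :
    ∀ z ∈ betaSet l, z < x + l.length := by
  induction l with
  | nil => simp [betaSet]
  | cons y l ih =>
    simp only [betaSet_cons, List.mem_cons, List.length_cons]
    rintro z (rfl | hz)
    · have := hl y (by simp); omega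
    · have := ih (fun w hw => hl w (by simp [hw])) z hz; omega

theorem pairwise_betaSet {l : List ℕ} (hl : l.Pairwise (· ≥ ·)) :
    (betaSet l).Pairwise (· > ·) := by
  induction l with
  | nil => simp [betaSet]
  | cons x l ih =>
    rw [List.pairwise_cons] at hl
    rw [betaSet_cons, List.pairwise_cons]
    exact ⟨lt_of_mem_betaSet hl.1, ih hl.2⟩

theorem fromBeta_of_perm_betaSet {bl l : List ℕ} (hperm : bl.Perm (betaSet l))
    (hl : l.Pairwise (· ≥ ·)) : fromBeta bl = l.filter (· ≠ 0) := by
  have hsort : List.insertionSort (· ≥ ·) bl = betaSet l :=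
    List.Perm.eq_of_pairwise' (List.pairwise_insertionSort _ bl)
      ((pairwise_betaSet hl).imp le_of_lt) ((List.perm_insertionSort _ bl).trans hperm)
  simp only [fromBeta, hsort]
  congr 1
  refine List.ext_getElem (by simp) fun i h₁ h₂ => ?_
  simp [betaSet]

def hookTerm (q : ℕ) (γ L : List ℕ) (x : ℕ) : ℤ :=
  if q ≤ x ∧ x - q ∉ L then
    (-1) ^ (L.filter (fun y => x - q < y ∧ y < x)).length *
      MN (fromBeta ((x - q) :: L.erase x)) γ
  else 0

theorem MN_cons_eq_sum_hookTerm (β : List ℕ) (q : ℕ) (γ : List ℕ) :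
    MN β (q :: γ) = ((betaSet β).map (hookTerm q γ (betaSet β))).sum := rfl

theorem hookTerm_of_lt {q x : ℕ} {γ L : List ℕ} (h : x < q) : hookTerm q γ L x = 0 :=
  if_neg fun h' => absurd h'.1 (Nat.not_le.2 h)

theorem hookTerm_of_mem {q r x : ℕ} {γ L : List ℕ} (hx : x = r + q) (hr : r ∈ L) :
    hookTerm q γ L x = 0 :=
  if_neg fun h' => h'.2 (by rwa [hx, Nat.add_sub_cancel])

theorem hookTerm_of_perm {q r x : ℕ} {γ L μ : List ℕ} (hx : x = r + q) (hr : r ∉ L)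
    (hperm : (r :: L.erase x).Perm (betaSet μ)) (hμ : μ.Pairwise (· ≥ ·)) :
    hookTerm q γ L x = (-1) ^ (L.filter (fun y => r < y ∧ y < x)).length *
      MN (μ.filter (· ≠ 0)) γ := by
  have hr' : x - q = r := by omega
  rw [hookTerm, if_pos ⟨by omega, hr'.symm ▸ hr⟩, hr', fromBeta_of_perm_betaSet hperm hμ]

theorem sum_map_hookTerm_eq_zero {q : ℕ} {γ L R : List ℕ} (h : ∀ x ∈ R, x < q) :
    (R.map (hookTerm q γ L)).sum = 0 :=
  List.sum_eq_zero fun _ hz => by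
    obtain ⟨x, hx, rfl⟩ := List.mem_map.1 hz
    exact hookTerm_of_lt (h x hx)

theorem MN_add_three_four_three_ones (k : ℕ) (γ : List ℕ) (hk : 2 ≤ k) :
    MN ((k + 3) :: 4 :: 3 :: List.replicate k 1) ((k + 3) :: γ) =
      MN (3 :: 2 :: 2 :: List.replicate k 1) γ + (-1) ^ k * MN [k + 3, 4] γ := by
  set R := betaSet (List.replicate k 1)
  have hR {y : ℕ} : y ∈ R ↔ 1 ≤ y ∧ y < 1 + k := mem_betaSet_replicate
  have hβ : betaSet ((k + 3) :: 4 :: 3 :: List.replicate k 1) =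
      (2 * k + 5) :: (k + 5) :: (k + 3) :: R := by
    simp only [betaSet_cons, List.length_cons, List.length_replicate, List.cons.injEq, and_true, R]
    omega
  have hμ₁ : betaSet (3 :: 2 :: 2 :: List.replicate k 1) =
      (k + 5) :: (k + 3) :: (k + 2) :: R := by
    simp only [betaSet_cons, List.length_cons, List.length_replicate, List.cons.injEq, and_true, R]
    omega
  have hμ₂ : betaSet ((k + 3) :: 4 :: List.replicate (k + 1) 0) =
      (2 * k + 5) :: (k + 5) :: (R ++ [0]) := by
    simp only [betaSet_cons, List.length_cons, List.length_replicate, betaSet_replicate_succ,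
      zero_add, List.cons.injEq, and_true, R]
    omega
  have hleg₁ : (((2 * k + 5) :: (k + 5) :: (k + 3) :: R).filter
      fun y => k + 2 < y ∧ y < 2 * k + 5).length = 2 := by
    rw [List.filter_cons_of_neg (by simp), List.filter_cons_of_pos (by simp; omega),
      List.filter_cons_of_pos (by simp; omega),
      List.filter_eq_nil_iff.2 fun y hy => by simp [hR] at hy ⊢; omega]
    rfl
  have hleg₂ : (((2 * k + 5) :: (k + 5) :: (k + 3) :: R).filter
      fun y => 0 < y ∧ y < k + 3).length = k := by
    rw [List.filter_cons_of_neg (by simp; omega), List.filter_cons_of_neg (by simp),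
      List.filter_cons_of_neg (by simp),
      List.filter_eq_self.2 fun y hy => by simp [hR] at hy ⊢; omega]
    simp [R]
  rw [MN_cons_eq_sum_hookTerm, hβ]
  simp only [List.map_cons, List.sum_cons]
  rw [hookTerm_of_perm (r := k + 2) (μ := 3 :: 2 :: 2 :: List.replicate k 1) (by omega)
      (by simp [hR]; omega) ?perm₁ ?sorted₁, hleg₁,
    hookTerm_of_mem (r := 2) (by omega) (by simp [hR]; omega),
    hookTerm_of_perm (r := 0) (μ := (k + 3) :: 4 :: List.replicate (k + 1) 0) (by omega)
      (by simp [hR]) ?perm₂ ?sorted₂, hleg₂,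
    sum_map_hookTerm_eq_zero fun y hy => by have := hR.1 hy; omega]
  · simp
  case perm₁ =>
    rw [hμ₁, List.erase_cons_head]
    exact (List.perm_middle (l₁ := [k + 5, k + 3])).symm
  case perm₂ =>
    rw [hμ₂, List.erase_cons_tail (by simp; omega), List.erase_cons_tail (by simp),
      List.erase_cons_head]
    exact (List.perm_append_singleton 0 ((2 * k + 5) :: (k + 5) :: R)).symm
  case sorted₁ => simp [List.pairwise_replicate]
  case sorted₂ => simp [List.pairwise_replicate, show 4 ≤ k + 3 by omega]

theorem MN_three_two_two_ones (k : ℕ) (γ : List ℕ) (hk : 3 ≤ k) :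
    MN (3 :: 2 :: 2 :: List.replicate k 1) ((k + 2) :: γ) = (-1) ^ k * MN [3, 2] γ := by
  set R := betaSet (List.replicate k 1)
  have hR {y : ℕ} : y ∈ R ↔ 1 ≤ y ∧ y < 1 + k := mem_betaSet_replicate
  have hβ : betaSet (3 :: 2 :: 2 :: List.replicate k 1) = (k + 5) :: (k + 3) :: (k + 2) :: R := by
    simp only [betaSet_cons, List.length_cons, List.length_replicate, List.cons.injEq, and_true, R]
    omega
  have hμ : betaSet (3 :: 2 :: List.replicate (k + 1) 0) = (k + 5) :: (k + 3) :: (R ++ [0]) := by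
    simp only [betaSet_cons, List.length_cons, List.length_replicate, betaSet_replicate_succ,
      zero_add, List.cons.injEq, and_true, R]
    omega
  have hleg : (((k + 5) :: (k + 3) :: (k + 2) :: R).filter
      fun y => 0 < y ∧ y < k + 2).length = k := by
    rw [List.filter_cons_of_neg (by simp), List.filter_cons_of_neg (by simp),
      List.filter_cons_of_neg (by simp),
      List.filter_eq_self.2 fun y hy => by simp [hR] at hy ⊢; omega]
    simp [R]
  rw [MN_cons_eq_sum_hookTerm, hβ]
  simp only [List.map_cons, List.sum_cons]
  rw [hookTerm_of_mem (r := 3) (by omega) (by simp [hR]; omega),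
    hookTerm_of_mem (r := 1) (by omega) (by simp [hR]; omega),
    hookTerm_of_perm (r := 0) (μ := 3 :: 2 :: List.replicate (k + 1) 0) (by omega)
      (by simp [hR]) ?perm ?sorted, hleg,
    sum_map_hookTerm_eq_zero fun y hy => by have := hR.1 hy; omega]
  · simp
  case perm =>
    rw [hμ, List.erase_cons_tail (by simp), List.erase_cons_tail (by simp),
      List.erase_cons_head]
    exact (List.perm_append_singleton 0 ((k + 5) :: (k + 3) :: R)).symm
  case sorted => simp [List.pairwise_replicate]

theorem MN_add_three_four (k : ℕ) (γ : List ℕ) (hk : 3 ≤ k) :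
    MN [k + 3, 4] ((k + 2) :: γ) = -MN [3, 2] γ := by
  have hβ : betaSet [k + 3, 4] = [k + 4, 4] := by simp [betaSet]
  have hleg : ([k + 4, 4].filter fun y => 2 < y ∧ y < k + 4).length = 1 := by
    rw [List.filter_cons_of_neg (by simp), List.filter_cons_of_pos (by simp; omega)]
    rfl
  rw [MN_cons_eq_sum_hookTerm, hβ]
  simp only [List.map_cons, List.map_nil, List.sum_cons, List.sum_nil]
  rw [hookTerm_of_lt (show 4 < k + 2 by omega),
    hookTerm_of_perm (r := 2) (μ := [3, 2]) (by omega) (by simp)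
      (by rw [List.erase_cons_head]; exact List.Perm.swap 4 2 []) (by decide), hleg]
  simp

/-- For `a ≥ 7`, the irreducible character of `S_{2a+4}` indexed by
`β = (a, 4, 3, 1^{a-3})` vanishes at the class of cycle type `(a, a-1, 4, 1)`. -/
theorem stmt_11 (a : ℕ) (ha : 7 ≤ a) :
    MN (a :: 4 :: 3 :: List.replicate (a - 3) 1) [a, a - 1, 4, 1] = 0 := by
  obtain ⟨k, rfl⟩ : ∃ k, a = k + 3 := ⟨a - 3, by omega⟩
  rw [show k + 3 - 3 = k by omega, show k + 3 - 1 = k + 2 by omega,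
    MN_add_three_four_three_ones k _ (by omega), MN_three_two_two_ones k _ (by omega),
    MN_add_three_four k _ (by omega)]
  ring
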